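/- Every folding of the open HP chain Z_{2k} has at least three external missing contacts, and every optimal folding of Z_{2k} has at most one internal missing contact. -/

import Mathlib

/-! ## Basic definitions for the 2D HP model on the square lattice ℤ² -/

/-- A lattice point. -/
abbrev Pt : Type := ℤ × ℤ

/-- Two lattice points are adjacent (at Euclidean distance 1). -/
def adjPt (p q : Pt) : Prop := (p.1 - q.1).natAbs + (p.2 - q.2).natAbs = 1

/-- Chain adjacency (consecutiveness) of monomer indices in an open chain of length `n`. -/
def openAdj (n : ℕ) (i j : Fin n) : Prop := i.val + 1 = j.val ∨ j.val + 1 = i.val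

/-- Chain adjacency of monomer indices in a closed chain of length `n`
(consecutive cyclically, so also the pair `{n-1, 0}`). -/
def closedAdj (n : ℕ) (i j : Fin n) : Prop :=
  (i.val + 1) % n = j.val ∨ (j.val + 1) % n = i.val

/-- A folding of an open chain of `n` monomers: an injective map into ℤ² sending
consecutive monomers to adjacent lattice points. -/
def IsOpenFolding (n : ℕ) (pos : Fin n → Pt) : Prop :=
  Function.Injective pos ∧ ∀ i j : Fin n, i.val + 1 = j.val → adjPt (pos i) (pos j)

/-- A folding of a closed chain of `n` monomers: an injective map into ℤ² sending
cyclically consecutive monomers to adjacent lattice points. -/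
def IsClosedFolding (n : ℕ) (pos : Fin n → Pt) : Prop :=
  Function.Injective pos ∧ ∀ i j : Fin n, (i.val + 1) % n = j.val → adjPt (pos i) (pos j)

/-- Monomers `i` and `j` form a contact in a folding `pos` of the open chain with labels `c`
(`true` = H, `false` = P): both are H, they are not consecutive along the chain, and their
images are lattice-adjacent. -/
def openContactRel (n : ℕ) (c : Fin n → Bool) (pos : Fin n → Pt) (i j : Fin n) : Prop :=
  c i = true ∧ c j = true ∧ ¬ openAdj n i j ∧ adjPt (pos i) (pos j)

/-- Contact relation for a folding of a closed chain. -/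
def closedContactRel (n : ℕ) (c : Fin n → Bool) (pos : Fin n → Pt) (i j : Fin n) : Prop :=
  c i = true ∧ c j = true ∧ ¬ closedAdj n i j ∧ adjPt (pos i) (pos j)

/-- The set of contacts (as unordered pairs) of a folding of an open chain. -/
def openContactSet (n : ℕ) (c : Fin n → Bool) (pos : Fin n → Pt) : Set (Sym2 (Fin n)) :=
  {e | ∃ i j : Fin n, e = s(i, j) ∧ openContactRel n c pos i j}

/-- The set of contacts (as unordered pairs) of a folding of a closed chain. -/
def closedContactSet (n : ℕ) (c : Fin n → Bool) (pos : Fin n → Pt) : Set (Sym2 (Fin n)) :=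
  {e | ∃ i j : Fin n, e = s(i, j) ∧ closedContactRel n c pos i j}

/-- The number of contacts of a folding of an open chain. -/
noncomputable def openContacts (n : ℕ) (c : Fin n → Bool) (pos : Fin n → Pt) : ℕ :=
  (openContactSet n c pos).ncard

/-- The number of contacts of a folding of a closed chain. -/
noncomputable def closedContacts (n : ℕ) (c : Fin n → Bool) (pos : Fin n → Pt) : ℕ :=
  (closedContactSet n c pos).ncard

/-- A folding of an open chain is optimal if it maximizes the number of contacts. -/
def OpenOptimal (n : ℕ) (c : Fin n → Bool) (pos : Fin n → Pt) : Prop :=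
  IsOpenFolding n pos ∧
    ∀ pos', IsOpenFolding n pos' → openContacts n c pos' ≤ openContacts n c pos

/-- A folding of a closed chain is optimal if it maximizes the number of contacts. -/
def ClosedOptimal (n : ℕ) (c : Fin n → Bool) (pos : Fin n → Pt) : Prop :=
  IsClosedFolding n pos ∧
    ∀ pos', IsClosedFolding n pos' → closedContacts n c pos' ≤ closedContacts n c pos

/-- The number of H-labeled monomers of a chain. -/
def hCount (n : ℕ) (c : Fin n → Bool) : ℕ :=
  (Finset.univ.filter fun i : Fin n => c i = true).card

/-- The contact graph of a folding of an open chain. -/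
def openContactGraph (n : ℕ) (c : Fin n → Bool) (pos : Fin n → Pt) : SimpleGraph (Fin n) :=
  SimpleGraph.fromRel (openContactRel n c pos)

/-- The contact graph of a folding of a closed chain. -/
def closedContactGraph (n : ℕ) (c : Fin n → Bool) (pos : Fin n → Pt) : SimpleGraph (Fin n) :=
  SimpleGraph.fromRel (closedContactRel n c pos)

/-- The conformation graph of a folding of a closed chain: chain edges together with contacts. -/
def conformationGraph (n : ℕ) (c : Fin n → Bool) (pos : Fin n → Pt) : SimpleGraph (Fin n) :=
  SimpleGraph.fromRel (fun i j => closedAdj n i j ∨ closedContactRel n c pos i j)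

/-- Squared Euclidean distance between lattice points. -/
def sqDist (p q : Pt) : ℤ := (p.1 - q.1) ^ 2 + (p.2 - q.2) ^ 2

/-- An isometry of the lattice ℤ² (exactly the translations, rotations by multiples of 90°,
reflections, and their compositions). -/
def IsLatticeIsometry (T : Pt → Pt) : Prop :=
  Function.Bijective T ∧ ∀ p q, sqDist (T p) (T q) = sqDist p q

/-- Two foldings are congruent if one is the image of the other under an isometry of ℤ². -/
def FoldingCongruent (n : ℕ) (pos pos' : Fin n → Pt) : Prop :=
  ∃ T : Pt → Pt, IsLatticeIsometry T ∧ ∀ i, pos' i = T (pos i)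

/-! ## Specific chains -/

/-- The chain (PHP)^m (for `n = 3m`): H exactly at positions ≡ 1 mod 3 (0-indexed). -/
def phpLabel (n : ℕ) : Fin n → Bool := fun i => decide (i.val % 3 = 1)

/-- The closed chain `S_k = P (HP)^u P (HP)^d` of length `2k+2`, where
`u = ⌈k/2⌉` and `d = ⌊k/2⌋` (0-indexed labels). -/
def skLabel (k : ℕ) : Fin (2*k+2) → Bool := fun i =>
  if i.val ≤ 2 * ((k+1)/2) then decide (i.val % 2 = 1) else decide (i.val % 2 = 0)

/-- The open chain `Z_{2k} = (HP)^k (PH)^k` of length `4k` (0-indexed labels). -/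
def zLabel (k : ℕ) : Fin (4*k) → Bool := fun i =>
  if i.val < 2*k then decide (i.val % 2 = 0) else decide (i.val % 2 = 1)

/-- The direction of the `j`-th edge of the folding `F_k` of `S_k`:
`E (ES)^d W (WN)^u` when `k` is even and `E (ES)^d S (WN)^u` when `k` is odd,
where `E = (1,0)`, `W = (-1,0)`, `N = (0,1)`, `S = (0,-1)`. -/
def fkDir (k : ℕ) (j : ℕ) : Pt :=
  if j = 0 then (1, 0)
  else if j ≤ 2 * (k/2) then (if j % 2 = 1 then (1, 0) else (0, -1))
  else if j = 2 * (k/2) + 1 then (if k % 2 = 0 then (-1, 0) else (0, -1))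
  else if (j - (2 * (k/2) + 2)) % 2 = 0 then (-1, 0) else (0, 1)

/-- The position of monomer `i` in the folding `F_k` of the closed chain `S_k`. -/
def fkPos (k : ℕ) (i : Fin (2*k+2)) : Pt := ∑ j ∈ Finset.range i.val, fkDir k j

/-- The direction of the `j`-th edge of the standard folding of `Z_{2k}`: the PP edge
(edge `2k-1`) is horizontal, the two edges adjacent to it descend from it, and the two
halves of the chain form two parallel staircases. -/
def stdZDir (k : ℕ) (j : ℕ) : Pt :=
  if j ≤ 2*k - 1 then (if j % 2 = 0 then (0, 1) else (-1, 0))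
  else if j = 2*k then (0, -1)
  else if j % 2 = 1 then (0, -1) else (1, 0)

/-- The position of monomer `i` in the standard folding of the open chain `Z_{2k}`. -/
def stdZPos (k : ℕ) (i : Fin (4*k)) : Pt := ∑ j ∈ Finset.range i.val, stdZDir k j

/-! ## Geometry: polygon of a closed folding, bounding box, missing contacts -/

/-- The real point corresponding to a lattice point. -/
def toR (p : Pt) : ℝ × ℝ := ((p.1 : ℝ), (p.2 : ℝ))

/-- The closed polygonal curve in ℝ² traced by a folded closed chain. -/
def polygonOf (n : ℕ) (pos : Fin n → Pt) : Set (ℝ × ℝ) :=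
  ⋃ i : Fin n, segment ℝ (toR (pos i))
    (toR (pos ⟨(i.val + 1) % n, Nat.mod_lt _ (Nat.lt_of_le_of_lt (Nat.zero_le i.val) i.isLt)⟩))

/-- `q` lies in the (closed) axis-parallel bounding box of the folding `pos`. -/
def inBBox (n : ℕ) (pos : Fin n → Pt) (q : Pt) : Prop :=
  (∃ i, (pos i).1 ≤ q.1) ∧ (∃ i, q.1 ≤ (pos i).1) ∧
  (∃ i, (pos i).2 ≤ q.2) ∧ (∃ i, q.2 ≤ (pos i).2)

/-- `q` lies on the wall `w` of the bounding box of the folding `pos`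
(`0` = east, `1` = west, `2` = north, `3` = south). -/
def onWall (n : ℕ) (pos : Fin n → Pt) (w : Fin 4) (q : Pt) : Prop :=
  inBBox n pos q ∧
    (if w = 0 then ∀ i, (pos i).1 ≤ q.1
     else if w = 1 then ∀ i, q.1 ≤ (pos i).1
     else if w = 2 then ∀ i, (pos i).2 ≤ q.2
     else ∀ i, q.2 ≤ (pos i).2)

/-- The segment from `p` to `q` lies along the boundary of the bounding box
(both endpoints on a common wall). -/
def edgeOnBoundary (n : ℕ) (pos : Fin n → Pt) (p q : Pt) : Prop :=
  ∃ w : Fin 4, onWall n pos w p ∧ onWall n pos w q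

/-- The missing contacts of a folding of an open chain: pairs `(v, q)` where `v` is an
H monomer and `q` is a lattice point adjacent to the image of `v` that is occupied
neither by a chain-neighbor of `v` nor by any H monomer.  The corresponding lattice
edge is the one from `pos v` to `q`. -/
def missingContactSet (n : ℕ) (c : Fin n → Bool) (pos : Fin n → Pt) : Set (Fin n × Pt) :=
  {vq | c vq.1 = true ∧ adjPt (pos vq.1) vq.2 ∧
        (∀ w : Fin n, openAdj n vq.1 w → pos w ≠ vq.2) ∧
        (∀ u : Fin n, c u = true → pos u ≠ vq.2)}

/-- A straight H node: a non-endpoint H monomer lying, together with both of its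
chain-neighbors, on a common wall of the bounding box. -/
def isStraightH (n : ℕ) (c : Fin n → Bool) (pos : Fin n → Pt) (i : Fin n) : Prop :=
  c i = true ∧ i.val ≠ 0 ∧ i.val ≠ n - 1 ∧
  ∃ w : Fin 4, onWall n pos w (pos i) ∧ ∀ j : Fin n, openAdj n i j → onWall n pos w (pos j)

/-- A coupled straight H node: a straight H node such that the preceding or following
H monomer along the chain lies on the same wall. -/
def isCoupledH (n : ℕ) (c : Fin n → Bool) (pos : Fin n → Pt) (i : Fin n) : Prop :=
  isStraightH n c pos i ∧
  ∃ w : Fin 4, onWall n pos w (pos i) ∧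
    ∃ j : Fin n, c j = true ∧ j ≠ i ∧ onWall n pos w (pos j) ∧
      ((j.val < i.val ∧ ∀ l : Fin n, j.val < l.val → l.val < i.val → c l = false) ∨
       (i.val < j.val ∧ ∀ l : Fin n, i.val < l.val → l.val < j.val → c l = false))

/-- A solitary straight H node: a straight H node that is not coupled. -/
def isSolitaryH (n : ℕ) (c : Fin n → Bool) (pos : Fin n → Pt) (i : Fin n) : Prop :=
  isStraightH n c pos i ∧ ¬ isCoupledH n c pos i

/-! ## Graph-theoretic notions -/

/-- A graph is a disjoint union of even cycles (plus isolated vertices): every vertex has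
degree 0 or 2, and the graph has no odd cycles (is 2-colorable). -/
def IsDisjointUnionOfEvenCycles {V : Type*} (G : SimpleGraph V) : Prop :=
  (∀ v, (G.neighborSet v).ncard = 0 ∨ (G.neighborSet v).ncard = 2) ∧ G.Colorable 2

/-- A graph consists of exactly `k` vertex-disjoint 4-cycles (plus isolated vertices). -/
def IsDisjointUnionOfFourCycles {V : Type*} (G : SimpleGraph V) (k : ℕ) : Prop :=
  ∃ f : Fin k × Fin 4 → V, Function.Injective f ∧
    ∀ a b : V, G.Adj a b ↔ ∃ m : Fin k, ∃ i j : Fin 4,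
      a = f (m, i) ∧ b = f (m, j) ∧ ((i.val + 1) % 4 = j.val ∨ (j.val + 1) % 4 = i.val)

/-- The vertex set `s` induces a 4-cycle of `G`: it has 4 elements, each of which has
exactly two neighbors inside `s`. -/
def IsFourCycleIn {V : Type*} (G : SimpleGraph V) (s : Set V) : Prop :=
  s.ncard = 4 ∧ ∀ v ∈ s, (s ∩ {u | G.Adj v u}).ncard = 2

/-- The chain position of the `a`-th H monomer (0-indexed) of the closed chain `S_k`. -/
def hIdx (k : ℕ) (a : Fin k) : Fin (2*k+2) :=
  if a.val + 1 ≤ (k+1)/2 then ⟨2*a.val+1, by have := a.isLt; omega⟩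
  else ⟨2*a.val+2, by have := a.isLt; omega⟩

/-! ## Auxiliary lemmas -/

lemma zLabel_iff (k : ℕ) (i : Fin (4*k)) : zLabel k i = true ↔
    ((i.val % 2 = 0 ∧ i.val < 2*k) ∨ (i.val % 2 = 1 ∧ 2*k ≤ i.val)) := by
  simp only [zLabel]
  split_ifs with h <;> simp <;> omega

lemma adjPt_iff (p q : Pt) : adjPt p q ↔
    q = (p.1+1,p.2) ∨ q = (p.1-1,p.2) ∨ q = (p.1,p.2+1) ∨ q = (p.1,p.2-1) := by
  obtain ⟨q1,q2⟩ := q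
  simp [adjPt, Prod.ext_iff]
  omega

lemma adjPt_symm {p q : Pt} (h : adjPt p q) : adjPt q p := by
  simp [adjPt] at *; omega

/-- Core wall lemma (north): either some H monomer is on the north wall, or every
monomer on the north wall is one of the middle PP pair. -/
lemma core_north (k : ℕ) (hk : 1 ≤ k) (pos : Fin (4*k) → Pt)
    (hinj : Function.Injective pos)
    (hadj : ∀ i j : Fin (4*k), i.val + 1 = j.val → adjPt (pos i) (pos j))
    (Y : ℤ) (hY : ∀ i, (pos i).2 ≤ Y) :
    (∃ i, zLabel k i = true ∧ (pos i).2 = Y) ∨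
    (∀ i, (pos i).2 = Y → (i.val = 2*k-1 ∨ i.val = 2*k)) := by
  by_cases hH : ∃ i, zLabel k i = true ∧ (pos i).2 = Y
  · exact Or.inl hH
  push_neg at hH
  right
  intro i hi
  by_contra hcon
  push_neg at hcon
  -- i is a P monomer, not one of the middle pair, so both neighbors are H
  have hci : ¬ (zLabel k i = true) := fun h => by
    have := hH i h; exact this hi
  rw [zLabel_iff] at hci
  push_neg at hci
  have hiv := i.isLt
  -- i.val is odd < 2k-1, or even ≥ 2k+2
  have hrange : (i.val % 2 = 1 ∧ i.val < 2*k - 1) ∨ (i.val % 2 = 0 ∧ 2*k + 2 ≤ i.val) := by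
    omega
  have h1 : 1 ≤ i.val ∧ i.val + 1 < 4*k := by omega
  set j1 : Fin (4*k) := ⟨i.val - 1, by omega⟩ with hj1
  set j2 : Fin (4*k) := ⟨i.val + 1, by omega⟩ with hj2
  have hc1 : zLabel k j1 = true := by rw [zLabel_iff]; simp [hj1]; omega
  have hc2 : zLabel k j2 = true := by rw [zLabel_iff]; simp [hj2]; omega
  have ha1 : adjPt (pos j1) (pos i) := hadj j1 i (by simp [hj1]; omega)
  have ha2 : adjPt (pos i) (pos j2) := hadj i j2 (by simp [hj2])
  -- both neighbors are strictly below Y, hence at (x_i, Y-1)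
  have key : ∀ j : Fin (4*k), zLabel k j = true → adjPt (pos i) (pos j) →
      pos j = ((pos i).1, Y - 1) := by
    intro j hcj haj
    have hlt : (pos j).2 < Y := lt_of_le_of_ne (hY j) (hH j hcj)
    rw [adjPt_iff] at haj
    rcases haj with h' | h' | h' | h' <;>
      (rw [h'] at hlt ⊢; simp [Prod.ext_iff] at hlt ⊢ <;> omega)
  have k1 := key j1 hc1 (adjPt_symm ha1)
  have k2 := key j2 hc2 ha2
  have : j1 = j2 := hinj (k1.trans k2.symm)
  rw [hj1, hj2, Fin.mk.injEq] at this
  omega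

/-- The two opposite horizontal walls cannot both consist only of the middle PP pair. -/
lemma opp_walls (k : ℕ) (hk : 1 ≤ k) (pos : Fin (4*k) → Pt)
    (hinj : Function.Injective pos)
    (hadj : ∀ i j : Fin (4*k), i.val + 1 = j.val → adjPt (pos i) (pos j))
    (Ymax Ymin : ℤ) (hub : ∀ i, (pos i).2 ≤ Ymax) (hlb : ∀ i, Ymin ≤ (pos i).2)
    (hat : ∃ i, (pos i).2 = Ymax) (hat' : ∃ i, (pos i).2 = Ymin)
    (hN : ∀ i, (pos i).2 = Ymax → (i.val = 2*k-1 ∨ i.val = 2*k))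
    (hS : ∀ i, (pos i).2 = Ymin → (i.val = 2*k-1 ∨ i.val = 2*k)) : False := by
  by_cases hspan : Ymax ≤ Ymin + 1
  · -- every monomer is on one of the walls; take monomer 0
    have h0 : (0:ℕ) < 4*k := by omega
    set z : Fin (4*k) := ⟨0, h0⟩
    have := hub z; have := hlb z
    have hz : (pos z).2 = Ymax ∨ (pos z).2 = Ymin := by omega
    have : z.val = 2*k-1 ∨ z.val = 2*k := by
      rcases hz with h | h
      · exact hN z h
      · exact hS z h
    have hz0 : z.val = 0 := rfl; omega
  · obtain ⟨a, ha⟩ := hat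
    obtain ⟨b, hb⟩ := hat'
    have hane : a ≠ b := by
      intro h; rw [h, hb] at ha; omega
    have hav := hN a ha
    have hbv := hS b hb
    -- a and b are the two middle monomers, which are chain-adjacent
    have hadjab : adjPt (pos a) (pos b) ∨ adjPt (pos b) (pos a) := by
      have : (a.val = 2*k-1 ∧ b.val = 2*k) ∨ (a.val = 2*k ∧ b.val = 2*k-1) := by
        have := Fin.val_ne_of_ne hane; omega
      rcases this with ⟨h1,h2⟩ | ⟨h1,h2⟩
      · exact Or.inl (hadj a b (by omega))
      · exact Or.inr (hadj b a (by omega))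
    have : (pos a).2 - (pos b).2 ≤ 1 ∧ (pos b).2 - (pos a).2 ≤ 1 := by
      rcases hadjab with h | h <;> (simp [adjPt] at h; omega)
    omega

/-- North and east walls cannot both consist only of the middle PP pair. -/
lemma adj_walls (k : ℕ) (hk : 1 ≤ k) (pos : Fin (4*k) → Pt)
    (hinj : Function.Injective pos)
    (hadj : ∀ i j : Fin (4*k), i.val + 1 = j.val → adjPt (pos i) (pos j))
    (Ymax Xmax : ℤ) (hub : ∀ i, (pos i).2 ≤ Ymax) (hxub : ∀ i, (pos i).1 ≤ Xmax)
    (hat : ∃ i, (pos i).2 = Ymax) (hat' : ∃ i, (pos i).1 = Xmax)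
    (hN : ∀ i, (pos i).2 = Ymax → (i.val = 2*k-1 ∨ i.val = 2*k))
    (hE : ∀ i, (pos i).1 = Xmax → (i.val = 2*k-1 ∨ i.val = 2*k)) : False := by
  obtain ⟨a, ha⟩ : ∃ a : Fin (4*k), a.val = 2*k-1 := ⟨⟨2*k-1, by omega⟩, rfl⟩
  obtain ⟨b, hb⟩ : ∃ b : Fin (4*k), b.val = 2*k := ⟨⟨2*k, by omega⟩, rfl⟩
  obtain ⟨u, hu⟩ : ∃ u : Fin (4*k), u.val = 2*k-2 := ⟨⟨2*k-2, by omega⟩, rfl⟩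
  obtain ⟨v, hv⟩ : ∃ v : Fin (4*k), v.val = 2*k+1 := ⟨⟨2*k+1, by omega⟩, rfl⟩
  have hadjua : adjPt (pos u) (pos a) := hadj u a (by omega)
  have hadjab : adjPt (pos a) (pos b) := hadj a b (by omega)
  have hadjbv : adjPt (pos b) (pos v) := hadj b v (by omega)
  -- claim A: if a is on the north wall then u sits directly below a
  have claimA : (pos a).2 = Ymax → pos u = ((pos a).1, Ymax - 1) := by
    intro haY
    have h1 : (pos u).2 < Ymax := by
      rcases lt_or_eq_of_le (hub u) with h | h
      · exact h
      · have := hN u h; omega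
    have h' := hadjua
    rw [adjPt_iff ] at h'
    have : pos a = pos u ∨ True := Or.inr trivial
    rcases (adjPt_iff _ _).mp (adjPt_symm hadjua) with h' | h' | h' | h' <;>
      (rw [h'] at h1 ⊢; simp [Prod.ext_iff] at h1 ⊢ <;> omega)
  have claimA' : (pos b).2 = Ymax → pos v = ((pos b).1, Ymax - 1) := by
    intro hbY
    have h1 : (pos v).2 < Ymax := by
      rcases lt_or_eq_of_le (hub v) with h | h
      · exact h
      · have := hN v h; omega
    rcases (adjPt_iff _ _).mp hadjbv with h' | h' | h' | h' <;>
      (rw [h'] at h1 ⊢; simp [Prod.ext_iff] at h1 ⊢ <;> omega)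
  -- both a and b lie on the north wall
  have hboth : (pos a).2 = Ymax ∧ (pos b).2 = Ymax := by
    obtain ⟨w, hw⟩ := hat
    have hwv := hN w hw
    have hwa : w = a ∨ w = b := by
      rcases hwv with h | h
      · left; exact Fin.ext (by omega)
      · right; exact Fin.ext (by omega)
    have main : (pos a).2 = Ymax → (pos b).2 = Ymax := by
      intro haY
      have hA := claimA haY
      rcases (adjPt_iff _ _).mp hadjab with h' | h' | h' | h' <;> rw [h']
      · exact haY
      · exact haY
      · exfalso; have := hub b; rw [h'] at this; simp at this; omega
      · exfalso
        have : pos b = pos u := by rw [h', hA, haY]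
        have := hinj this; rw [Fin.ext_iff] at this; omega
    have main' : (pos b).2 = Ymax → (pos a).2 = Ymax := by
      intro hbY
      have hA := claimA' hbY
      rcases (adjPt_iff _ _).mp (adjPt_symm hadjab) with h' | h' | h' | h' <;> rw [h']
      · exact hbY
      · exact hbY
      · exfalso; have := hub a; rw [h'] at this; simp at this; omega
      · exfalso
        have : pos a = pos v := by rw [h', hA, hbY]
        have := hinj this; rw [Fin.ext_iff] at this; omega
    rcases hwa with rfl | rfl
    · exact ⟨hw, main hw⟩
    · exact ⟨main' hw, hw⟩
  obtain ⟨haY, hbY⟩ := hboth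
  have hA := claimA haY
  have hA' := claimA' hbY
  -- b is horizontally adjacent to a
  have hx : (pos b).1 = (pos a).1 + 1 ∨ (pos b).1 = (pos a).1 - 1 := by
    rcases (adjPt_iff _ _).mp hadjab with h' | h' | h' | h' <;> rw [h']
    · left; rfl
    · right; rfl
    · exfalso; rw [h'] at hbY; simp at hbY; omega
    · exfalso
      have : pos b = pos u := by rw [h', hA, haY]
      have := hinj this; rw [Fin.ext_iff] at this; omega
  -- east wall
  obtain ⟨w, hwX⟩ := hat'
  have hwv := hE w hwX
  have hwab : pos w = pos a ∨ pos w = pos b := by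
    rcases hwv with h | h
    · left; congr 1; exact Fin.ext (by omega)
    · right; congr 1; exact Fin.ext (by omega)
  rcases hx with hx | hx
  · -- Xmax = (pos b).1 and v has x-coord = (pos b).1
    have hXb : Xmax = (pos b).1 := by
      have h1 := hxub b
      rcases hwab with h | h <;> rw [h] at hwX <;> omega
    have : v.val = 2*k-1 ∨ v.val = 2*k := hE v (by rw [hA']; omega)
    omega
  · have hXa : Xmax = (pos a).1 := by
      have h1 := hxub a
      rcases hwab with h | h <;> rw [h] at hwX <;> omega
    have : u.val = 2*k-1 ∨ u.val = 2*k := hE u (by rw [hA]; omega)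
    omega

lemma missFinite (n : ℕ) (c : Fin n → Bool) (pos : Fin n → Pt) :
    (missingContactSet n c pos).Finite := by
  have h4 : ∀ p : Pt, {q | adjPt p q}.Finite := by
    intro p
    apply Set.Finite.subset (Set.toFinite {(p.1+1,p.2), (p.1-1,p.2), (p.1,p.2+1), (p.1,p.2-1)})
    intro q hq
    rcases (adjPt_iff p q).mp hq with h|h|h|h <;> simp [h]
  apply Set.Finite.subset (Set.finite_iUnion fun i : Fin n =>
    (Set.finite_singleton i).prod (h4 (pos i)))
  rintro ⟨v, q⟩ hm
  exact Set.mem_iUnion.2 ⟨v, ⟨rfl, hm.2.1⟩⟩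


lemma adjPt_negx {p q : Pt} (h : adjPt p q) : adjPt (-p.1, p.2) (-q.1, q.2) := by
  simp only [adjPt] at h ⊢; omega

lemma adjPt_negxy {p q : Pt} (h : adjPt p q) : adjPt (-p.1, -p.2) (-q.1, -q.2) := by
  simp only [adjPt] at h ⊢; omega

lemma adjPt_negy {p q : Pt} (h : adjPt p q) : adjPt (p.1, -p.2) (q.1, -q.2) := by
  simp only [adjPt] at h ⊢; omega

lemma adjPt_swap {p q : Pt} (h : adjPt p q) : adjPt (p.2, p.1) (q.2, q.1) := by
  simp only [adjPt] at h ⊢; omega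

lemma adjPt_swapnegx {p q : Pt} (h : adjPt p q) : adjPt (p.2, -p.1) (q.2, -q.1) := by
  simp only [adjPt] at h ⊢; omega

set_option maxHeartbeats 1000000 in
theorem ext_three (k : ℕ) (hk : 1 ≤ k) (pos : Fin (4*k) → Pt)
    (hfold : IsOpenFolding (4*k) pos) :
    3 ≤ {vq ∈ missingContactSet (4*k) (zLabel k) pos | ¬ inBBox (4*k) pos vq.2}.ncard := by
  obtain ⟨hinj, hadj⟩ := hfold
  set Sext := {vq ∈ missingContactSet (4*k) (zLabel k) pos | ¬ inBBox (4*k) pos vq.2} with hSext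
  have hSfin : Sext.Finite := (missFinite _ _ _).subset (Set.sep_subset _ _)
  have hne : (Finset.univ : Finset (Fin (4*k))).Nonempty := ⟨⟨0, by omega⟩, Finset.mem_univ _⟩
  obtain ⟨iN, -, hiN⟩ := Finset.exists_max_image Finset.univ (fun i => (pos i).2) hne
  obtain ⟨iS, -, hiS⟩ := Finset.exists_min_image Finset.univ (fun i => (pos i).2) hne
  obtain ⟨iE, -, hiE⟩ := Finset.exists_max_image Finset.univ (fun i => (pos i).1) hne
  obtain ⟨iW, -, hiW⟩ := Finset.exists_min_image Finset.univ (fun i => (pos i).1) hne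
  simp only [Finset.mem_univ, forall_const, true_implies] at hiN hiS hiE hiW
  set Ymax := (pos iN).2 with hYmax
  set Ymin := (pos iS).2 with hYmin
  set Xmax := (pos iE).1 with hXmax
  set Xmin := (pos iW).1 with hXmin
  -- transformed foldings
  have mkfold : ∀ (f : Pt → Pt), (∀ p q : Pt, f p = f q → p = q) →
      (∀ p q : Pt, adjPt p q → adjPt (f p) (f q)) →
      Function.Injective (fun i => f (pos i)) ∧
      (∀ i j : Fin (4*k), i.val + 1 = j.val → adjPt (f (pos i)) (f (pos j))) := by
    intro f hfi hfa
    exact ⟨fun x y h => hinj (hfi _ _ h), fun i j h => hfa _ _ (hadj i j h)⟩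
  -- the four "wall" dichotomies
  have HN := core_north k hk pos hinj hadj Ymax hiN
  have hfS := mkfold (fun p => (p.1, -p.2))
    (fun p q h => by simpa [Prod.ext_iff, neg_inj] using h)
    (fun p q h => adjPt_negy h)
  have HS := core_north k hk _ hfS.1 hfS.2 (-Ymin) (fun i => by simpa using hiS i)
  have hfE := mkfold (fun p => (p.2, p.1))
    (fun p q h => by simp [Prod.ext_iff] at h ⊢; tauto)
    (fun p q h => adjPt_swap h)
  have HE := core_north k hk _ hfE.1 hfE.2 Xmax (fun i => hiE i)
  have hfW := mkfold (fun p => (p.2, -p.1))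
    (fun p q h => by simp [Prod.ext_iff, neg_inj] at h ⊢; tauto)
    (fun p q h => adjPt_swapnegx h)
  have HW := core_north k hk _ hfW.1 hfW.2 (-Xmin) (fun i => by simpa using hiW i)
  simp only [neg_inj, neg_le_neg_iff] at HS HW
  -- rewrite to convenient forms
  have HS' : (∃ i, zLabel k i = true ∧ (pos i).2 = Ymin) ∨
      (∀ i, (pos i).2 = Ymin → (i.val = 2*k-1 ∨ i.val = 2*k)) := by
    rcases HS with ⟨i, h1, h2⟩ | h
    · exact Or.inl ⟨i, h1, by omega⟩
    · exact Or.inr (fun i hi => h i (by omega))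
  have HW' : (∃ i, zLabel k i = true ∧ (pos i).1 = Xmin) ∨
      (∀ i, (pos i).1 = Xmin → (i.val = 2*k-1 ∨ i.val = 2*k)) := by
    rcases HW with ⟨i, h1, h2⟩ | h
    · exact Or.inl ⟨i, h1, by omega⟩
    · exact Or.inr (fun i hi => h i (by omega))
  -- pairwise contradictions
  have cNS : ¬((∀ i, (pos i).2 = Ymax → (i.val = 2*k-1 ∨ i.val = 2*k)) ∧
      (∀ i, (pos i).2 = Ymin → (i.val = 2*k-1 ∨ i.val = 2*k))) := fun ⟨h1, h2⟩ =>
    opp_walls k hk pos hinj hadj Ymax Ymin hiN hiS ⟨iN, rfl⟩ ⟨iS, rfl⟩ h1 h2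
  have cEW : ¬((∀ i, (pos i).1 = Xmax → (i.val = 2*k-1 ∨ i.val = 2*k)) ∧
      (∀ i, (pos i).1 = Xmin → (i.val = 2*k-1 ∨ i.val = 2*k))) := fun ⟨h1, h2⟩ =>
    opp_walls k hk _ hfE.1 hfE.2 Xmax Xmin hiE hiW ⟨iE, rfl⟩ ⟨iW, rfl⟩ h1 h2
  have cNE : ¬((∀ i, (pos i).2 = Ymax → (i.val = 2*k-1 ∨ i.val = 2*k)) ∧
      (∀ i, (pos i).1 = Xmax → (i.val = 2*k-1 ∨ i.val = 2*k))) := fun ⟨h1, h2⟩ =>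
    adj_walls k hk pos hinj hadj Ymax Xmax hiN hiE ⟨iN, rfl⟩ ⟨iE, rfl⟩ h1 h2
  have hfX := mkfold (fun p => (-p.1, p.2))
    (fun p q h => by simp [Prod.ext_iff, neg_inj] at h ⊢; tauto)
    (fun p q h => adjPt_negx h)
  have cNW : ¬((∀ i, (pos i).2 = Ymax → (i.val = 2*k-1 ∨ i.val = 2*k)) ∧
      (∀ i, (pos i).1 = Xmin → (i.val = 2*k-1 ∨ i.val = 2*k))) := fun ⟨h1, h2⟩ =>
    adj_walls k hk _ hfX.1 hfX.2 Ymax (-Xmin) (fun i => hiN i)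
      (fun i => by simpa using hiW i) ⟨iN, rfl⟩ ⟨iW, rfl⟩ h1
      (fun i hi => h2 i (by have hi' : -(pos i).1 = -Xmin := hi; omega))
  have cSE : ¬((∀ i, (pos i).2 = Ymin → (i.val = 2*k-1 ∨ i.val = 2*k)) ∧
      (∀ i, (pos i).1 = Xmax → (i.val = 2*k-1 ∨ i.val = 2*k))) := fun ⟨h1, h2⟩ =>
    adj_walls k hk _ hfS.1 hfS.2 (-Ymin) Xmax (fun i => by simpa using hiS i)
      (fun i => hiE i) ⟨iS, rfl⟩ ⟨iE, rfl⟩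
      (fun i hi => h1 i (by have hi' : -(pos i).2 = -Ymin := hi; omega)) h2
  have hfXY := mkfold (fun p => (-p.1, -p.2))
    (fun p q h => by simp [Prod.ext_iff, neg_inj] at h ⊢; tauto)
    (fun p q h => adjPt_negxy h)
  have cSW : ¬((∀ i, (pos i).2 = Ymin → (i.val = 2*k-1 ∨ i.val = 2*k)) ∧
      (∀ i, (pos i).1 = Xmin → (i.val = 2*k-1 ∨ i.val = 2*k))) := fun ⟨h1, h2⟩ =>
    adj_walls k hk _ hfXY.1 hfXY.2 (-Ymin) (-Xmin) (fun i => by simpa using hiS i)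
      (fun i => by simpa using hiW i) ⟨iS, rfl⟩ ⟨iW, rfl⟩
      (fun i hi => h1 i (by have hi' : -(pos i).2 = -Ymin := hi; omega))
      (fun i hi => h2 i (by have hi' : -(pos i).1 = -Xmin := hi; omega))
  -- witness constructors
  have hYY : Ymin ≤ Ymax := hiS iN
  have hXX : Xmin ≤ Xmax := hiW iE
  have wN : (∃ i, zLabel k i = true ∧ (pos i).2 = Ymax) →
      ∃ p : Fin (4*k) × Pt, p ∈ Sext ∧ p.2.2 = Ymax + 1 := by
    rintro ⟨v, hv, hvy⟩
    refine ⟨(v, ((pos v).1, Ymax+1)), ⟨⟨hv, ?_, ?_, ?_⟩, ?_⟩, rfl⟩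
    · simp only [adjPt]; omega
    · intro w _ h
      have h2 := congrArg Prod.snd h; have := hiN w
      simp only at h2; omega
    · intro u _ h
      have h2 := congrArg Prod.snd h; have := hiN u
      simp only at h2; omega
    · rintro ⟨-,-,-,i,hi⟩
      have := hiN i; simp only at hi; omega
  have wS : (∃ i, zLabel k i = true ∧ (pos i).2 = Ymin) →
      ∃ p : Fin (4*k) × Pt, p ∈ Sext ∧ p.2.2 = Ymin - 1 := by
    rintro ⟨v, hv, hvy⟩
    refine ⟨(v, ((pos v).1, Ymin-1)), ⟨⟨hv, ?_, ?_, ?_⟩, ?_⟩, rfl⟩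
    · simp only [adjPt]; omega
    · intro w _ h
      have h2 := congrArg Prod.snd h; have := hiS w
      simp only at h2; omega
    · intro u _ h
      have h2 := congrArg Prod.snd h; have := hiS u
      simp only at h2; omega
    · rintro ⟨-,-,⟨i,hi⟩,-⟩
      have := hiS i; simp only at hi; omega
  have wE : (∃ i, zLabel k i = true ∧ (pos i).1 = Xmax) →
      ∃ p : Fin (4*k) × Pt, p ∈ Sext ∧ p.2.1 = Xmax + 1 ∧ Ymin ≤ p.2.2 ∧ p.2.2 ≤ Ymax := by
    rintro ⟨v, hv, hvx⟩
    refine ⟨(v, (Xmax+1, (pos v).2)), ⟨⟨hv, ?_, ?_, ?_⟩, ?_⟩, rfl, hiS v, hiN v⟩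
    · simp only [adjPt]; omega
    · intro w _ h
      have h2 := congrArg Prod.fst h; have := hiE w
      simp only at h2; omega
    · intro u _ h
      have h2 := congrArg Prod.fst h; have := hiE u
      simp only at h2; omega
    · rintro ⟨-,⟨i,hi⟩,-,-⟩
      have := hiE i; simp only at hi; omega
  have wW : (∃ i, zLabel k i = true ∧ (pos i).1 = Xmin) →
      ∃ p : Fin (4*k) × Pt, p ∈ Sext ∧ p.2.1 = Xmin - 1 ∧ Ymin ≤ p.2.2 ∧ p.2.2 ≤ Ymax := by
    rintro ⟨v, hv, hvx⟩
    refine ⟨(v, (Xmin-1, (pos v).2)), ⟨⟨hv, ?_, ?_, ?_⟩, ?_⟩, rfl, hiS v, hiN v⟩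
    · simp only [adjPt]; omega
    · intro w _ h
      have h2 := congrArg Prod.fst h; have := hiW w
      simp only at h2; omega
    · intro u _ h
      have h2 := congrArg Prod.fst h; have := hiW u
      simp only at h2; omega
    · rintro ⟨⟨i,hi⟩,-,-,-⟩
      have := hiW i; simp only at hi; omega
  -- three distinct elements give the bound
  have tri : ∀ p1 p2 p3 : Fin (4*k) × Pt, p1 ∈ Sext → p2 ∈ Sext → p3 ∈ Sext →
      p1 ≠ p2 → p1 ≠ p3 → p2 ≠ p3 → 3 ≤ Sext.ncard := by
    intro p1 p2 p3 h1 h2 h3 h12 h13 h23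
    have hsub : ({p1, p2, p3} : Set (Fin (4*k) × Pt)) ⊆ Sext := by
      intro x hx
      rcases hx with rfl | rfl | rfl <;> assumption
    have := Set.ncard_le_ncard hsub hSfin
    rwa [Set.ncard_eq_three.mpr ⟨p1, p2, p3, h12, h13, h23, rfl⟩] at this
  have TNSE : (∃ i, zLabel k i = true ∧ (pos i).2 = Ymax) →
      (∃ i, zLabel k i = true ∧ (pos i).2 = Ymin) →
      (∃ i, zLabel k i = true ∧ (pos i).1 = Xmax) → 3 ≤ Sext.ncard := by
    intro h1 h2 h3
    obtain ⟨p1, hp1, e1⟩ := wN h1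
    obtain ⟨p2, hp2, e2⟩ := wS h2
    obtain ⟨p3, hp3, e3, e4, e5⟩ := wE h3
    exact tri p1 p2 p3 hp1 hp2 hp3
      (fun h => by rw [h] at e1; omega) (fun h => by rw [h] at e1; omega)
      (fun h => by rw [h] at e2; omega)
  have TNSW : (∃ i, zLabel k i = true ∧ (pos i).2 = Ymax) →
      (∃ i, zLabel k i = true ∧ (pos i).2 = Ymin) →
      (∃ i, zLabel k i = true ∧ (pos i).1 = Xmin) → 3 ≤ Sext.ncard := by
    intro h1 h2 h3
    obtain ⟨p1, hp1, e1⟩ := wN h1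
    obtain ⟨p2, hp2, e2⟩ := wS h2
    obtain ⟨p3, hp3, e3, e4, e5⟩ := wW h3
    exact tri p1 p2 p3 hp1 hp2 hp3
      (fun h => by rw [h] at e1; omega) (fun h => by rw [h] at e1; omega)
      (fun h => by rw [h] at e2; omega)
  have TNEW : (∃ i, zLabel k i = true ∧ (pos i).2 = Ymax) →
      (∃ i, zLabel k i = true ∧ (pos i).1 = Xmax) →
      (∃ i, zLabel k i = true ∧ (pos i).1 = Xmin) → 3 ≤ Sext.ncard := by
    intro h1 h2 h3
    obtain ⟨p1, hp1, e1⟩ := wN h1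
    obtain ⟨p2, hp2, e2, e2', e2''⟩ := wE h2
    obtain ⟨p3, hp3, e3, e3', e3''⟩ := wW h3
    exact tri p1 p2 p3 hp1 hp2 hp3
      (fun h => by rw [h] at e1; omega) (fun h => by rw [h] at e1; omega)
      (fun h => by rw [h] at e2; omega)
  have TSEW : (∃ i, zLabel k i = true ∧ (pos i).2 = Ymin) →
      (∃ i, zLabel k i = true ∧ (pos i).1 = Xmax) →
      (∃ i, zLabel k i = true ∧ (pos i).1 = Xmin) → 3 ≤ Sext.ncard := by
    intro h1 h2 h3
    obtain ⟨p1, hp1, e1⟩ := wS h1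
    obtain ⟨p2, hp2, e2, e2', e2''⟩ := wE h2
    obtain ⟨p3, hp3, e3, e3', e3''⟩ := wW h3
    exact tri p1 p2 p3 hp1 hp2 hp3
      (fun h => by rw [h] at e1; omega) (fun h => by rw [h] at e1; omega)
      (fun h => by rw [h] at e2; omega)
  rcases HN with hAN | hPN <;> rcases HS' with hAS | hPS <;>
    rcases HE with hAE | hPE <;> rcases HW' with hAW | hPW <;>
    first
      | exact TNSE hAN hAS hAE
      | exact TNSW hAN hAS hAW
      | exact TNEW hAN hAE hAW
      | exact TSEW hAS hAE hAW
      | exact (cNS ⟨hPN, hPS⟩).elim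
      | exact (cEW ⟨hPE, hPW⟩).elim
      | exact (cNE ⟨hPN, hPE⟩).elim
      | exact (cNW ⟨hPN, hPW⟩).elim
      | exact (cSE ⟨hPS, hPE⟩).elim
      | exact (cSW ⟨hPS, hPW⟩).elim


lemma adjPt_ne {p q : Pt} (h : adjPt p q) : p ≠ q := by
  intro he; rw [he] at h; unfold adjPt at h; omega

lemma rel_symm {n c pos} {i j : Fin n} (h : openContactRel n c pos i j) :
    openContactRel n c pos j i :=
  ⟨h.2.1, h.1, fun ha => h.2.2.1 (by unfold openAdj at *; tauto), adjPt_symm h.2.2.2⟩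

lemma contactSet_eq_edgeSet (n : ℕ) (c : Fin n → Bool) (pos : Fin n → Pt)
    (hinj : Function.Injective pos) :
    openContactSet n c pos = (openContactGraph n c pos).edgeSet := by
  ext e
  induction e using Sym2.ind with
  | _ a b =>
    simp only [openContactSet, Set.mem_setOf_eq, SimpleGraph.mem_edgeSet, openContactGraph,
      SimpleGraph.fromRel_adj]
    constructor
    · rintro ⟨i, j, he, hrel⟩
      rw [Sym2.eq_iff] at he
      have hne : i ≠ j := fun h => adjPt_ne hrel.2.2.2 (by rw [h])
      rcases he with ⟨rfl, rfl⟩ | ⟨rfl, rfl⟩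
      · exact ⟨hne, Or.inl hrel⟩
      · exact ⟨hne.symm, Or.inr hrel⟩
    · rintro ⟨hne, hrel | hrel⟩
      · exact ⟨a, b, rfl, hrel⟩
      · exact ⟨b, a, Sym2.eq_swap, hrel⟩

lemma zLabel_nbrP (k : ℕ) {v w : Fin (4*k)} (hv : zLabel k v = true)
    (ha : openAdj (4*k) v w) : ¬ (zLabel k w = true) := by
  rw [zLabel_iff] at hv ⊢
  unfold openAdj at ha
  have := v.isLt; have := w.isLt
  omega

lemma hset_card (k : ℕ) (hk : 1 ≤ k) :
    (Finset.univ.filter fun i : Fin (4*k) => zLabel k i = true).card = 2*k := by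
  have h2k : ∀ j : Fin (2*k), (if j.val < k then 2*j.val else 2*j.val+1) < 4*k := by
    intro j; have := j.isLt; split <;> omega
  rw [show 2*k = (Finset.univ : Finset (Fin (2*k))).card by simp]
  apply Finset.card_bij' (fun i _ => (⟨i.val/2, by have := i.isLt; omega⟩ : Fin (2*k)))
    (fun j _ => (⟨if j.val < k then 2*j.val else 2*j.val+1, h2k j⟩ : Fin (4*k)))
  · intro a ha
    exact Finset.mem_univ _
  · intro a ha
    simp only [Finset.mem_filter, Finset.mem_univ, true_and, zLabel_iff] at ha
    apply Fin.ext
    show (if a.val/2 < k then 2*(a.val/2) else 2*(a.val/2)+1 : ℕ) = a.val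
    have := a.isLt
    split <;> omega
  · intro j _
    apply Fin.ext
    show (if j.val < k then 2*j.val else 2*j.val+1)/2 = j.val
    have := j.isLt
    split <;> omega
  · intro j _
    rw [Finset.mem_filter]
    refine ⟨Finset.mem_univ _, ?_⟩
    rw [zLabel_iff]
    show ((if j.val < k then 2*j.val else 2*j.val+1) % 2 = 0 ∧ (if j.val < k then 2*j.val else 2*j.val+1) < 2*k) ∨ ((if j.val < k then 2*j.val else 2*j.val+1) % 2 = 1 ∧ 2*k ≤ (if j.val < k then 2*j.val else 2*j.val+1))
    have := j.isLt
    split <;> omega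

set_option maxHeartbeats 2000000 in
lemma count_bound (k : ℕ) (hk : 1 ≤ k) (pos : Fin (4*k) → Pt)
    (hinj : Function.Injective pos)
    (hadj : ∀ i j : Fin (4*k), i.val + 1 = j.val → adjPt (pos i) (pos j)) :
    (missingContactSet (4*k) (zLabel k) pos).ncard
      + 2 * openContacts (4*k) (zLabel k) pos + 4*k ≤ 8*k + 2 := by
  classical
  have hSfin := missFinite (4*k) (zLabel k) pos
  set T := hSfin.toFinset with hT
  have hM : (missingContactSet (4*k) (zLabel k) pos).ncard = T.card :=
    Set.ncard_eq_toFinset_card _ hSfin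
  -- the four neighbour points of a monomer
  set N4 : Fin (4*k) → Finset Pt := fun v =>
    {((pos v).1+1,(pos v).2), ((pos v).1-1,(pos v).2),
     ((pos v).1,(pos v).2+1), ((pos v).1,(pos v).2-1)} with hN4
  have memN4 : ∀ v q, q ∈ N4 v ↔ adjPt (pos v) q := by
    intro v q
    rw [hN4, adjPt_iff]
    simp
  have cardN4 : ∀ v, (N4 v).card ≤ 4 := by
    intro v
    rw [hN4]
    apply le_trans (Finset.card_insert_le _ _)
    apply Nat.succ_le_succ
    apply le_trans (Finset.card_insert_le _ _)
    apply Nat.succ_le_succ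
    apply le_trans (Finset.card_insert_le _ _)
    simp
  -- the three disjoint classes of neighbour points of an H monomer
  set Fm : Fin (4*k) → Finset Pt := fun v =>
    (N4 v).filter (fun q => (v, q) ∈ missingContactSet (4*k) (zLabel k) pos) with hFm
  set Fo : Fin (4*k) → Finset Pt := fun v =>
    (N4 v).filter (fun q => ∃ u, zLabel k u = true ∧ pos u = q) with hFo
  set Fc : Fin (4*k) → Finset Pt := fun v =>
    (N4 v).filter (fun q => ∃ w, openAdj (4*k) v w ∧ pos w = q) with hFc
  -- fibers of T over first coordinate
  have hfib : T.card = ∑ v : Fin (4*k), (T.filter (fun p => p.1 = v)).card :=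
    Finset.card_eq_sum_card_fiberwise (fun p _ => Finset.mem_univ p.1)
  have hfib2 : ∀ v, (T.filter (fun p => p.1 = v)).card = (Fm v).card := by
    intro v
    apply Finset.card_bij (fun p _ => p.2)
    · rintro ⟨a, q⟩ hp
      rw [Finset.mem_filter, hT, Set.Finite.mem_toFinset] at hp
      obtain ⟨hmem, rfl⟩ : _ ∧ a = v := ⟨hp.1, hp.2⟩
      rw [hFm, Finset.mem_filter, memN4]
      exact ⟨hmem.2.1, hmem⟩
    · rintro ⟨a, q⟩ hp ⟨a', q'⟩ hp' h
      rw [Finset.mem_filter] at hp hp'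
      simp only at h
      rw [Prod.ext_iff]
      exact ⟨hp.2.trans hp'.2.symm, h⟩
    · intro q hq
      rw [hFm, Finset.mem_filter] at hq
      exact ⟨(v, q), by rw [Finset.mem_filter, hT, Set.Finite.mem_toFinset]; exact ⟨hq.2, rfl⟩, rfl⟩
  -- the three classes are disjoint for an H monomer
  have hdisj : ∀ v, zLabel k v = true →
      (Fm v).card + (Fo v).card + (Fc v).card ≤ 4 := by
    intro v hv
    have d1 : Disjoint (Fm v) (Fo v) := by
      rw [Finset.disjoint_left]
      intro q hq1 hq2
      rw [hFm, Finset.mem_filter] at hq1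
      rw [hFo, Finset.mem_filter] at hq2
      obtain ⟨u, hu, hup⟩ := hq2.2
      exact hq1.2.2.2.2 u hu hup
    have d2 : Disjoint (Fm v ∪ Fo v) (Fc v) := by
      rw [Finset.disjoint_left]
      intro q hq1 hq2
      rw [hFc, Finset.mem_filter] at hq2
      obtain ⟨w, hw, hwp⟩ := hq2.2
      rcases Finset.mem_union.mp hq1 with hq1 | hq1
      · rw [hFm, Finset.mem_filter] at hq1
        exact hq1.2.2.2.1 w hw hwp
      · rw [hFo, Finset.mem_filter] at hq1
        obtain ⟨u, hu, hup⟩ := hq1.2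
        have : u = w := hinj (hup.trans hwp.symm)
        exact zLabel_nbrP k hv hw (this ▸ hu)
    have hsub : (Fm v ∪ Fo v ∪ Fc v) ⊆ N4 v := by
      intro q hq
      rcases Finset.mem_union.mp hq with hq | hq
      · rcases Finset.mem_union.mp hq with hq | hq
        · exact Finset.filter_subset _ _ hq
        · exact Finset.filter_subset _ _ hq
      · exact Finset.filter_subset _ _ hq
    calc (Fm v).card + (Fo v).card + (Fc v).card
        = (Fm v ∪ Fo v).card + (Fc v).card := by rw [Finset.card_union_of_disjoint d1]
      _ = (Fm v ∪ Fo v ∪ Fc v).card := by rw [Finset.card_union_of_disjoint d2]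
      _ ≤ (N4 v).card := Finset.card_le_card hsub
      _ ≤ 4 := cardN4 v
  -- chain neighbours give a lower bound for Fc
  have hFc2 : ∀ v : Fin (4*k), 0 < v.val → v.val < 4*k - 1 → 2 ≤ (Fc v).card := by
    intro v h0 h1
    have hiv := v.isLt
    set w1 : Fin (4*k) := ⟨v.val - 1, by omega⟩ with hw1
    set w2 : Fin (4*k) := ⟨v.val + 1, by omega⟩ with hw2
    have hm1 : pos w1 ∈ Fc v := by
      rw [hFc, Finset.mem_filter, memN4]
      refine ⟨adjPt_symm (hadj w1 v (by rw [hw1]; simp; omega)), w1, Or.inr (by rw [hw1]; simp; omega), rfl⟩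
    have hm2 : pos w2 ∈ Fc v := by
      rw [hFc, Finset.mem_filter, memN4]
      refine ⟨hadj v w2 (by rw [hw2]), w2, Or.inl (by rw [hw2]), rfl⟩
    have hne : pos w1 ≠ pos w2 := by
      intro h
      have := hinj h
      rw [hw1, hw2, Fin.mk.injEq] at this
      omega
    have : ({pos w1, pos w2} : Finset Pt) ⊆ Fc v := by
      intro q hq
      rcases Finset.mem_insert.mp hq with rfl | hq
      · exact hm1
      · rw [Finset.mem_singleton] at hq
        rw [hq]
        exact hm2
    calc 2 = ({pos w1, pos w2} : Finset Pt).card := (Finset.card_pair hne).symm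
      _ ≤ (Fc v).card := Finset.card_le_card this
  have hFc1 : ∀ v : Fin (4*k), v.val = 0 ∨ v.val = 4*k - 1 → 1 ≤ (Fc v).card := by
    intro v hv
    rcases hv with hv | hv
    · have hm2 : pos ⟨1, by omega⟩ ∈ Fc v := by
        rw [hFc, Finset.mem_filter, memN4]
        refine ⟨hadj v _ (by simp; omega), ⟨1, by omega⟩, Or.inl (by simp; omega), rfl⟩
      exact Finset.card_pos.mpr ⟨_, hm2⟩
    · have hm2 : pos ⟨4*k-2, by omega⟩ ∈ Fc v := by
        rw [hFc, Finset.mem_filter, memN4]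
        refine ⟨adjPt_symm (hadj _ v (by simp; omega)), ⟨4*k-2, by omega⟩, Or.inr (by simp; omega), rfl⟩
      exact Finset.card_pos.mpr ⟨_, hm2⟩
  -- handshake: twice the number of contacts is the degree sum of the contact graph
  set G := openContactGraph (4*k) (zLabel k) pos with hG
  have hCC : openContacts (4*k) (zLabel k) pos = G.edgeFinset.card := by
    rw [openContacts, contactSet_eq_edgeSet _ _ _ hinj, ← hG, Set.ncard_eq_toFinset_card']
    congr 1
  have hhs := SimpleGraph.sum_degrees_eq_twice_card_edges G
  have hdegFo : ∀ v, zLabel k v = true → G.degree v ≤ (Fo v).card := by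
    intro v hv
    rw [← SimpleGraph.card_neighborFinset_eq_degree]
    apply Finset.card_le_card_of_injOn (fun u => pos u)
    · intro u hu
      rw [Finset.mem_coe, SimpleGraph.mem_neighborFinset, hG, openContactGraph, SimpleGraph.fromRel_adj] at hu
      rw [Finset.mem_coe, hFo, Finset.mem_filter, memN4]
      rcases hu.2 with h | h
      · exact ⟨h.2.2.2, u, h.2.1, rfl⟩
      · exact ⟨adjPt_symm h.2.2.2, u, h.1, rfl⟩
    · intro u _ u' _ h
      exact hinj h
  have hdeg0 : ∀ v, ¬ (zLabel k v = true) → G.degree v = 0 := by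
    intro v hv
    rw [← SimpleGraph.card_neighborFinset_eq_degree, Finset.card_eq_zero,
      Finset.eq_empty_iff_forall_notMem]
    intro u hu
    rw [SimpleGraph.mem_neighborFinset, hG, openContactGraph, SimpleGraph.fromRel_adj] at hu
    rcases hu.2 with h | h
    · exact hv h.1
    · exact hv h.2.1
  set Hs := Finset.univ.filter (fun v : Fin (4*k) => zLabel k v = true) with hHs
  have hHcard : Hs.card = 2*k := hset_card k hk
  have hsum1 : T.card = ∑ v ∈ Hs, (Fm v).card := by
    rw [hfib]
    rw [← Finset.sum_subset (Finset.subset_univ Hs)]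
    · exact Finset.sum_congr rfl (fun v _ => hfib2 v)
    · intro v _ hv
      rw [hHs, Finset.mem_filter] at hv
      push_neg at hv
      have hv' := hv (Finset.mem_univ v)
      rw [Finset.card_eq_zero, Finset.eq_empty_iff_forall_notMem]
      rintro ⟨a, q⟩ hp
      rw [Finset.mem_filter, hT, Set.Finite.mem_toFinset] at hp
      exact hv' (by rw [← hp.2]; exact hp.1.1)
  have hsum2 : ∑ v, G.degree v = ∑ v ∈ Hs, G.degree v := by
    rw [← Finset.sum_subset (Finset.subset_univ Hs)]
    intro v _ hv
    rw [hHs, Finset.mem_filter] at hv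
    push_neg at hv
    exact hdeg0 v (hv (Finset.mem_univ v))
  have hsum2' : 2 * openContacts (4*k) (zLabel k) pos ≤ ∑ v ∈ Hs, (Fo v).card := by
    rw [hCC, ← hhs, hsum2]
    apply Finset.sum_le_sum
    intro v hv
    rw [hHs, Finset.mem_filter] at hv
    exact hdegFo v hv.2
  have hsum3 : ∑ v ∈ Hs, ((Fm v).card + (Fo v).card + (Fc v).card) ≤ 8*k := by
    calc ∑ v ∈ Hs, ((Fm v).card + (Fo v).card + (Fc v).card)
        ≤ ∑ _v ∈ Hs, 4 := by
          apply Finset.sum_le_sum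
          intro v hv
          rw [hHs, Finset.mem_filter] at hv
          exact hdisj v hv.2
      _ = 8*k := by rw [Finset.sum_const, hHcard, smul_eq_mul]; ring
  -- lower bound on the chain-neighbour class
  have he0 : (⟨0, by omega⟩ : Fin (4*k)) ∈ Hs := by
    rw [hHs, Finset.mem_filter, zLabel_iff]
    exact ⟨Finset.mem_univ _, by simp; omega⟩
  have heL : (⟨4*k-1, by omega⟩ : Fin (4*k)) ∈ Hs := by
    rw [hHs, Finset.mem_filter, zLabel_iff]
    refine ⟨Finset.mem_univ _, ?_⟩
    simp
    omega
  have hne0L : (⟨4*k-1, by omega⟩ : Fin (4*k)) ≠ ⟨0, by omega⟩ := by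
    rw [Ne, Fin.mk.injEq]
    omega
  have heL' : (⟨4*k-1, by omega⟩ : Fin (4*k)) ∈ Hs.erase ⟨0, by omega⟩ :=
    Finset.mem_erase.mpr ⟨hne0L, heL⟩
  have hsum4 : 4*k ≤ (∑ v ∈ Hs, (Fc v).card) + 2 := by
    rw [← Finset.add_sum_erase Hs _ he0, ← Finset.add_sum_erase _ _ heL']
    have hRcard : ((Hs.erase ⟨0, by omega⟩).erase ⟨4*k-1, by omega⟩).card = 2*k - 2 := by
      rw [Finset.card_erase_of_mem heL', Finset.card_erase_of_mem he0, hHcard]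
      omega
    have hR2 : ∀ v ∈ (Hs.erase ⟨0, by omega⟩).erase ⟨4*k-1, by omega⟩, 2 ≤ (Fc v).card := by
      intro v hv
      rw [Finset.mem_erase, Finset.mem_erase] at hv
      have h1 : v.val ≠ 4*k-1 := fun h => hv.1 (Fin.ext h)
      have h2 : v.val ≠ 0 := fun h => hv.2.1 (Fin.ext h)
      exact hFc2 v (by omega) (by omega)
    have := Finset.card_nsmul_le_sum _ _ _ hR2
    rw [hRcard, smul_eq_mul] at this
    have g0 := hFc1 ⟨0, by omega⟩ (Or.inl rfl)
    have gL := hFc1 ⟨4*k-1, by omega⟩ (Or.inr rfl)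
    omega
  -- assemble
  have hFmFoFc : ∑ v ∈ Hs, (Fm v).card + ∑ v ∈ Hs, (Fo v).card + ∑ v ∈ Hs, (Fc v).card
      = ∑ v ∈ Hs, ((Fm v).card + (Fo v).card + (Fc v).card) := by
    rw [Finset.sum_add_distrib, Finset.sum_add_distrib]
  omega

def zForm (k m : ℕ) : Pt :=
  if m ≤ 2*k then (-(↑(m/2) : ℤ), (↑((m+1)/2) : ℤ))
  else ((↑((m-(2*k+1))/2) : ℤ) - k, (k:ℤ) - 1 - ↑((m-2*k)/2))

lemma zSum (k : ℕ) (hk : 1 ≤ k) : ∀ m, m < 4*k →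
    (∑ j ∈ Finset.range m, stdZDir k j) = zForm k m := by
  intro m
  induction m with
  | zero =>
    intro _
    simp [zForm]; rfl
  | succ m ih =>
    intro hm
    rw [Finset.sum_range_succ, ih (by omega)]
    unfold zForm stdZDir
    split_ifs <;> (rw [Prod.ext_iff]; constructor <;> simp <;> omega)

lemma stdZPos_eq (k : ℕ) (hk : 1 ≤ k) (i : Fin (4*k)) :
    stdZPos k i = zForm k i.val := zSum k hk i.val i.isLt

lemma std_fold (k : ℕ) (hk : 1 ≤ k) : IsOpenFolding (4*k) (stdZPos k) := by
  constructor
  · intro i j h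
    rw [stdZPos_eq k hk, stdZPos_eq k hk] at h
    have hi := i.isLt; have hj := j.isLt
    apply Fin.ext
    unfold zForm at h
    split_ifs at h <;> (rw [Prod.ext_iff] at h; simp at h; omega)
  · intro i j hij
    rw [stdZPos_eq k hk, stdZPos_eq k hk, ← hij]
    have hj := j.isLt
    unfold zForm adjPt
    split_ifs <;> simp <;> omega

lemma std_contacts (k : ℕ) (hk : 1 ≤ k) :
    2*k - 1 ≤ openContacts (4*k) (zLabel k) (stdZPos k) := by
  classical
  have hb : ∀ l : Fin (2*k-1), (if l.val < k then 2*l.val else 2*(l.val-k+1)) < 4*k := by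
    intro l; have := l.isLt; split <;> omega
  have hb2 : ∀ l : Fin (2*k-1), (if l.val < k then 4*k-1-2*l.val else 4*k+1-2*(l.val-k+1)) < 4*k := by
    intro l; have := l.isLt; split <;> omega
  set g : Fin (2*k-1) → Sym2 (Fin (4*k)) := fun l =>
    s(⟨if l.val < k then 2*l.val else 2*(l.val-k+1), hb l⟩,
      ⟨if l.val < k then 4*k-1-2*l.val else 4*k+1-2*(l.val-k+1), hb2 l⟩) with hg
  have hginj : Function.Injective g := by
    intro l1 l2 h
    rw [hg] at h
    simp only [Sym2.eq_iff, Fin.mk.injEq] at h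
    have h1 := l1.isLt; have h2 := l2.isLt
    apply Fin.ext
    rcases h with ⟨ha, hb⟩ | ⟨ha, hb⟩ <;> split_ifs at ha hb <;> omega
  have hgmem : ∀ l, g l ∈ openContactSet (4*k) (zLabel k) (stdZPos k) := by
    intro l
    have hl := l.isLt
    refine ⟨_, _, by rw [hg], ?_, ?_, ?_, ?_⟩
    · rw [zLabel_iff]
      simp only [Fin.val_mk]
      split <;> omega
    · rw [zLabel_iff]
      simp only [Fin.val_mk]
      split <;> omega
    · unfold openAdj
      simp only [Fin.val_mk]
      split <;> omega
    · rw [stdZPos_eq k hk, stdZPos_eq k hk]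
      unfold zForm adjPt
      simp only [Fin.val_mk]
      split_ifs <;> simp <;> omega
  have hrange : (Set.range g).ncard = 2*k-1 := by
    rw [← Set.image_univ, Set.ncard_image_of_injective _ hginj, Set.ncard_univ,
      Nat.card_eq_fintype_card, Fintype.card_fin]
  calc 2*k-1 = (Set.range g).ncard := hrange.symm
    _ ≤ (openContactSet (4*k) (zLabel k) (stdZPos k)).ncard :=
        Set.ncard_le_ncard (Set.range_subset_iff.mpr hgmem) (Set.toFinite _)

/-- Every folding of the open HP chain `Z_{2k}` has at least three
external missing contacts, and every optimal folding of `Z_{2k}` has at most one internal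
missing contact. -/
theorem missing_contacts_of_foldings_of_z2k (k : ℕ) (hk : 1 ≤ k) (pos : Fin (4*k) → Pt) :
    (IsOpenFolding (4*k) pos →
      3 ≤ {vq ∈ missingContactSet (4*k) (zLabel k) pos | ¬ inBBox (4*k) pos vq.2}.ncard) ∧
    (OpenOptimal (4*k) (zLabel k) pos →
      {vq ∈ missingContactSet (4*k) (zLabel k) pos | inBBox (4*k) pos vq.2}.ncard ≤ 1) := by
  constructor
  · exact fun hfold => ext_three k hk pos hfold
  · intro hopt
    obtain ⟨hfold, hmax⟩ := hopt
    have hext := ext_three k hk pos hfold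
    have hcnt := count_bound k hk pos hfold.1 hfold.2
    have hC : 2*k-1 ≤ openContacts (4*k) (zLabel k) pos :=
      le_trans (std_contacts k hk) (hmax _ (std_fold k hk))
    have hSfin := missFinite (4*k) (zLabel k) pos
    have hfin1 : {vq ∈ missingContactSet (4*k) (zLabel k) pos | inBBox (4*k) pos vq.2}.Finite :=
      hSfin.subset (Set.sep_subset _ _)
    have hfin2 : {vq ∈ missingContactSet (4*k) (zLabel k) pos | ¬ inBBox (4*k) pos vq.2}.Finite :=
      hSfin.subset (Set.sep_subset _ _)
    have hdisj : Disjoint {vq ∈ missingContactSet (4*k) (zLabel k) pos | inBBox (4*k) pos vq.2}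
        {vq ∈ missingContactSet (4*k) (zLabel k) pos | ¬ inBBox (4*k) pos vq.2} := by
      rw [Set.disjoint_left]
      rintro p ⟨_, h1⟩ ⟨_, h2⟩
      exact h2 h1
    have hunion : {vq ∈ missingContactSet (4*k) (zLabel k) pos | inBBox (4*k) pos vq.2} ∪
        {vq ∈ missingContactSet (4*k) (zLabel k) pos | ¬ inBBox (4*k) pos vq.2}
        = missingContactSet (4*k) (zLabel k) pos := by
      ext p
      simp only [Set.mem_union, Set.mem_sep_iff]
      tauto
    have hu := Set.ncard_union_eq hdisj hfin1 hfin2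
    rw [hunion] at hu
    omega
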